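/- Let θ, φ ∈ ℝ with cos θ ≠ 0, and fix natural numbers k and ℓ. Then there exists a polynomial Q ∈ ℂ[X] of degree at most ℓ such that for every natural number n ≥ ℓ, setting N = n + k − ℓ, the many-photon matrix element of the circuit consisting of a beam splitter of angle θ followed by a phase shifter of angle φ on the first mode satisfies e^{iNφ} · c_θ((n, k), (N, ℓ)) = e^{iNφ} · (cos θ)^N · √(N!/n!) · Q(n); equivalently, c_θ((n, k), (N, ℓ)) = (cos θ)^N · √(N!/n!) · Q(n). Moreover, if sin θ ≠ 0 then Q has degree exactly ℓ. -/

import Mathlib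

/-!
Substituting `q = k - j` in the Fock-basis sum leaves the terms
`choose n (ℓ - j) * choose k j * a ^ (n - ℓ + 2 j) * b ^ (k + ℓ - 2 j)`, `j ≤ min ℓ k`.
Pulling out `a ^ N` (possible as `a ≠ 0`), each term is `choose n (ℓ - j)`, a polynomial of
degree `ℓ - j` in `n`, times a constant. Only `j = 0` reaches degree `ℓ`, and its leading
coefficient is a nonzero multiple of `b ^ (k + ℓ)`, nonzero exactly when `sin θ ≠ 0`.
-/

open Complex Real Finset Polynomial

noncomputable def bsCoeff (θ : ℝ) (k ℓ : ℕ × ℕ) : ℂ :=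
  if ℓ.1 + ℓ.2 = k.1 + k.2 then
    (Real.sqrt ((ℓ.1.factorial * ℓ.2.factorial : ℕ) /
        ((k.1.factorial * k.2.factorial : ℕ) : ℝ)) : ℂ) *
      ∑ pq ∈ (Finset.HasAntidiagonal.antidiagonal ℓ.1).filter (fun pq => pq.1 ≤ k.1 ∧ pq.2 ≤ k.2),
        (k.1.choose pq.1 : ℂ) * (k.2.choose pq.2 : ℂ) *
          (Real.cos θ : ℂ) ^ (k.2 + pq.1 - pq.2) *
          (Complex.I * Real.sin θ) ^ (k.1 - pq.1 + pq.2)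
  else 0

theorem sum_filter_antidiagonal_eq_sum_range {M : Type*} [AddCommMonoid M] {n k ℓ : ℕ}
    (h : ℓ ≤ n) (f : ℕ × ℕ → M) :
    ∑ pq ∈ (antidiagonal (n + k - ℓ)).filter (fun pq => pq.1 ≤ n ∧ pq.2 ≤ k), f pq =
      ∑ j ∈ range (min ℓ k + 1), f (n - ℓ + j, k - j) := by
  refine sum_nbij' (fun pq => k - pq.2) (fun j => (n - ℓ + j, k - j)) ?_ ?_ ?_ ?_ ?_
  · simp only [mem_filter, HasAntidiagonal.mem_antidiagonal, mem_range, Prod.forall]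
    omega
  · simp only [mem_filter, HasAntidiagonal.mem_antidiagonal, mem_range]
    omega
  · simp only [mem_filter, HasAntidiagonal.mem_antidiagonal, Prod.forall, Prod.mk.injEq]
    omega
  · simp only [mem_range]
    omega
  · simp only [mem_filter, HasAntidiagonal.mem_antidiagonal, Prod.forall]
    intro p q hpq
    congr 1
    ext <;> dsimp only <;> omega

section descPochhammerSum

variable {R : Type*} [CommRing R] (c : ℕ → R) (s : Finset ℕ) (ℓ : ℕ)

theorem degree_sum_smul_descPochhammer_sub_le [Nontrivial R] [NoZeroDivisors R] :
    (∑ j ∈ s, c j • descPochhammer R (ℓ - j)).degree ≤ ℓ := by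
  refine (degree_sum_le _ _).trans (Finset.sup_le fun j _ => (degree_smul_le _ _).trans ?_)
  rw [degree_eq_natDegree (monic_descPochhammer R _).ne_zero, descPochhammer_natDegree]
  exact_mod_cast Nat.sub_le ℓ j

theorem coeff_sum_smul_descPochhammer_sub_self [Nontrivial R] [NoZeroDivisors R]
    (hs : ∀ j ∈ s, j ≤ ℓ) (h0 : 0 ∈ s) :
    (∑ j ∈ s, c j • descPochhammer R (ℓ - j)).coeff ℓ = c 0 := by
  rw [finsetSum_coeff, sum_eq_single_of_mem 0 h0]
  · have hlead := (monic_descPochhammer R ℓ).coeff_natDegree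
    rw [descPochhammer_natDegree] at hlead
    rw [coeff_smul, Nat.sub_zero, hlead, smul_eq_mul, mul_one]
  · intro j hj hj0
    rw [coeff_smul, coeff_eq_zero_of_natDegree_lt, smul_zero]
    rw [descPochhammer_natDegree]
    have := hs j hj
    omega

end descPochhammerSum

/-- `eval n` of this polynomial is `a ^ (-N)` times the reindexed Fock-basis sum,
`N = n + k - ℓ`. -/
noncomputable def bsPoly {K : Type*} [Field K] (a b : K) (k ℓ : ℕ) : K[X] :=
  ∑ j ∈ range (min ℓ k + 1),
    (k.choose j * a ^ (2 * j) / a ^ k * b ^ (k + ℓ - 2 * j) / (ℓ - j).factorial) •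
      descPochhammer K (ℓ - j)

section bsPoly

variable {K : Type*} [Field K] (a b : K) (k ℓ : ℕ)

theorem degree_bsPoly_le : (bsPoly a b k ℓ).degree ≤ ℓ :=
  degree_sum_smul_descPochhammer_sub_le _ _ _

theorem degree_bsPoly [CharZero K] (ha : a ≠ 0) (hb : b ≠ 0) :
    (bsPoly a b k ℓ).degree = ℓ := by
  refine degree_eq_of_le_of_coeff_ne_zero (degree_bsPoly_le a b k ℓ) ?_
  rw [bsPoly, coeff_sum_smul_descPochhammer_sub_self _ _ _
    (fun j hj => by simp only [mem_range] at hj; omega) (by simp)]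
  simp [ha, hb, Nat.factorial_ne_zero]

theorem pow_mul_eval_bsPoly [CharZero K] (ha : a ≠ 0) {n : ℕ} (h : ℓ ≤ n) :
    a ^ (n + k - ℓ) * (bsPoly a b k ℓ).eval (n : K) =
      ∑ j ∈ range (min ℓ k + 1),
        n.choose (ℓ - j) * k.choose j * a ^ (n - ℓ + 2 * j) * b ^ (k + ℓ - 2 * j) := by
  rw [bsPoly, eval_finsetSum, mul_sum]
  refine sum_congr rfl fun j _ => ?_
  have hchoose : (n.choose (ℓ - j) : K) = n.descFactorial (ℓ - j) / (ℓ - j).factorial := by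
    rw [Nat.descFactorial_eq_factorial_mul_choose]
    field_simp [Nat.factorial_ne_zero]
    push_cast
    ring
  have hpow : a ^ (n - ℓ + 2 * j) = a ^ (n + k - ℓ) * a ^ (2 * j) / a ^ k := by
    rw [eq_div_iff (pow_ne_zero _ ha), ← pow_add, ← pow_add]
    congr 1
    omega
  rw [eval_smul, descPochhammer_eval_eq_descFactorial, smul_eq_mul, hchoose, hpow]
  ring

end bsPoly

theorem Real.sqrt_mul_div_mul {x y z w : ℝ} (h : 0 ≤ x / z) :
    Real.sqrt (x * y / (z * w)) = Real.sqrt (x / z) * Real.sqrt (y / w) := by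
  rw [mul_div_mul_comm, Real.sqrt_mul h]

theorem bsCoeff_eq_sum {θ : ℝ} {n k ℓ : ℕ} (h : ℓ ≤ n) :
    bsCoeff θ (n, k) (n + k - ℓ, ℓ) =
      (Real.sqrt ((n + k - ℓ).factorial / n.factorial) : ℂ) *
        Real.sqrt (ℓ.factorial / k.factorial) *
        ∑ j ∈ range (min ℓ k + 1), n.choose (ℓ - j) * k.choose j *
          (Real.cos θ : ℂ) ^ (n - ℓ + 2 * j) * (I * Real.sin θ) ^ (k + ℓ - 2 * j) := by
  rw [bsCoeff, if_pos (by dsimp only; omega)]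
  dsimp only
  push_cast
  rw [Real.sqrt_mul_div_mul (by positivity), ofReal_mul]
  rw [sum_filter_antidiagonal_eq_sum_range h]
  congr 1
  refine sum_congr rfl fun j hj => ?_
  simp only [mem_range] at hj
  rw [show n - ℓ + j = n - (ℓ - j) by omega, Nat.choose_symm (by omega),
    Nat.choose_symm (by omega : j ≤ k),
    show k + (n - (ℓ - j)) - (k - j) = n - ℓ + 2 * j by omega,
    show n - (n - (ℓ - j)) + (k - j) = k + ℓ - 2 * j by omega]

theorem bsCoeff_polynomial_form (θ φ : ℝ) (hcos : Real.cos θ ≠ 0) (k ℓ : ℕ) :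
    ∃ Q : Polynomial ℂ, Q.degree ≤ (ℓ : WithBot ℕ) ∧
      (∀ n : ℕ, ℓ ≤ n →
        Complex.exp (Complex.I * ((n + k - ℓ : ℕ) : ℂ) * φ) *
            bsCoeff θ (n, k) (n + k - ℓ, ℓ) =
          Complex.exp (Complex.I * ((n + k - ℓ : ℕ) : ℂ) * φ) *
            (Real.cos θ : ℂ) ^ (n + k - ℓ) *
            (Real.sqrt ((n + k - ℓ).factorial / (n.factorial : ℝ)) : ℂ) *
            Q.eval (n : ℂ)) ∧
      (Real.sin θ ≠ 0 → Q.degree = (ℓ : WithBot ℕ)) := by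
  have ha : (Real.cos θ : ℂ) ≠ 0 := ofReal_ne_zero.mpr hcos
  have hsqrt : (Real.sqrt (ℓ.factorial / k.factorial) : ℂ) ≠ 0 :=
    ofReal_ne_zero.mpr (Real.sqrt_ne_zero'.mpr (by positivity))
  refine ⟨C (Real.sqrt (ℓ.factorial / k.factorial) : ℂ) *
    bsPoly (Real.cos θ : ℂ) (I * Real.sin θ) k ℓ, ?_, fun n h => ?_, fun hsin => ?_⟩
  · rw [degree_C_mul hsqrt]
    exact degree_bsPoly_le _ _ _ _
  · rw [bsCoeff_eq_sum h, ← pow_mul_eval_bsPoly _ _ _ _ ha h, eval_mul, eval_C]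
    ring
  · rw [degree_C_mul hsqrt]
    exact degree_bsPoly _ _ _ _ ha (mul_ne_zero I_ne_zero (ofReal_ne_zero.mpr hsin))
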